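/- arXiv:1905.10015 — 4 statements merged into one kernel-verified Lean document; each statement's English description precedes it below -/
import Mathlib

section
/- Let G be a countable amenable group, let X ⊂ Σ^G be a G-SFT and let Y ⊂ X be a G-subshift contained in X. Then for every ε > 0 there exists a G-SFT Z with Y ⊆ Z ⊆ X such that h_top(G ↷ Y) ≤ h_top(G ↷ Z) ≤ h_top(G ↷ Y) + ε. -/
open Filter Topology

/-! ### Symbolic dynamics over a countable group -/

/-- The left shift action of `G` on the full shift `G → A`: `(shiftMul g x) h = x (h * g)`. -/
def shiftMul {G A : Type*} [Group G] (g : G) (x : G → A) : G → A :=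
  fun h => x (h * g)

/-- A pattern: a coloring of a finite subset (its support) of the group. -/
structure Pattern (G A : Type*) where
  supp : Finset G
  val : {g // g ∈ supp} → A

/-- A pattern appears (somewhere) in a configuration `x`. -/
def Pattern.appearsIn {G A : Type*} [Group G] (p : Pattern G A) (x : G → A) : Prop :=
  ∃ g : G, ∀ h : {g // g ∈ p.supp}, x ((h : G) * g) = p.val h

/-- The set of configurations in which no pattern from `𝓕` appears. -/
def avoidSet {G A : Type*} [Group G] (𝓕 : Set (Pattern G A)) : Set (G → A) :=
  { x | ∀ p ∈ 𝓕, ¬ p.appearsIn x }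

/-- A subshift: a closed, shift-invariant subset of the full shift
(the alphabet carrying the discrete topology, `G → A` the product topology). -/
def IsSubshift {G A : Type*} [Group G] (X : Set (G → A)) : Prop :=
  (letI : TopologicalSpace A := ⊥; IsClosed X) ∧ ∀ g : G, ∀ x ∈ X, shiftMul g x ∈ X

/-- A subshift of finite type: defined by a finite set of forbidden patterns. -/
def IsSFT {G A : Type*} [Group G] (X : Set (G → A)) : Prop :=
  ∃ 𝓕 : Set (Pattern G A), 𝓕.Finite ∧ X = avoidSet 𝓕

/-- The language of `X` with support `F`: patterns on `F` appearing in a configuration of `X`. -/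
def lang {G A : Type*} [Group G] (X : Set (G → A)) (F : Finset G) :
    Set ({g // g ∈ F} → A) :=
  { p | ∃ x ∈ X, ∀ h : {g // g ∈ F}, x (h : G) = p h }

/-- Topological entropy of a subshift over a countable amenable group, via the infimum
formula `h_top(G ↷ X) = inf_F (1/|F|) log |L_F(X)|` over nonempty finite `F ⊆ G`. -/
noncomputable def subshiftEntropy {G A : Type*} [Group G] (X : Set (G → A)) : ℝ :=
  ⨅ F : {F : Finset G // F.Nonempty},
    Real.log (((lang X (F : Finset G)).ncard : ℝ)) / (((F : Finset G).card : ℝ))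

/-- A (left) Følner sequence for `G`. -/
def IsFolnerSeq {G : Type*} [Group G] (F : ℕ → Finset G) : Prop :=
  (∀ n, (F n).Nonempty) ∧
  ∀ g : G,
    Tendsto (fun n => ((((g * ·) '' (F n : Set G)) \ (F n : Set G)).ncard : ℝ) / ((F n).card : ℝ))
      atTop (𝓝 0)

/-- Amenability of a countable group: the existence of a Følner sequence. -/
def IsAmenable (G : Type*) [Group G] : Prop :=
  ∃ F : ℕ → Finset G, IsFolnerSeq F

/-- `entropiesSFT G` is the set of real numbers attained as topological entropies of
(non-empty) `G`-subshifts of finite type. -/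
def entropiesSFT (G : Type*) [Group G] : Set ℝ :=
  { r | ∃ (A : Type) (_ : Fintype A) (X : Set (G → A)),
      IsSFT X ∧ X.Nonempty ∧ subshiftEntropy X = r }

/-! ### Cocycles, charts and embeddings -/

/-- An `H`-cocycle on `X ⊆ G → A`: a continuous map `γ : H × X → G` (each alphabet and `G`
discrete) satisfying `γ(h₁h₂, x) = γ(h₁, γ(h₂,x)·x) * γ(h₂,x)` on `X`. -/
def IsCocycle {G H A : Type*} [Group G] [Group H] (X : Set (G → A))
    (γ : H → (G → A) → G) : Prop :=
  (∀ h : H,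
    letI : TopologicalSpace A := ⊥
    letI : TopologicalSpace G := ⊥
    ContinuousOn (γ h) X) ∧
  ∀ h₁ h₂ : H, ∀ x ∈ X, γ (h₁ * h₂) x = γ h₁ (shiftMul (γ h₂ x) x) * γ h₂ x

/-- The left action `H ↷^x G` induced by a cocycle: `h ·ₓ g = γ(h, g·x) * g`. -/
def chartSMul {G H A : Type*} [Group G] [Group H] (γ : H → (G → A) → G)
    (x : G → A) (h : H) (g : G) : G :=
  γ h (shiftMul g x) * g

/-- A `G`-chart of `H`: a `G`-subshift `X` together with an `H`-cocycle on it. -/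
def IsChart {G H A : Type*} [Group G] [Group H] (X : Set (G → A))
    (γ : H → (G → A) → G) : Prop :=
  IsSubshift X ∧ IsCocycle X γ

/-- A free `G`-chart of `H`: the induced action `H ↷^x G` is free for every `x ∈ X`. -/
def IsFreeChart {G H A : Type*} [Group G] [Group H] (X : Set (G → A))
    (γ : H → (G → A) → G) : Prop :=
  IsChart X γ ∧ ∀ x ∈ X, ∀ h : H, ∀ g : G, chartSMul γ x h g = g → h = 1

/-- The `(X,γ)`-embedding `Y_γ[X]` of an `H`-subshift `Y`: all configurations
`z : G → B × A` whose second component lies in `X` and such that for every `g ∈ G` the induced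
configuration `h ↦ z(γ(h, g·x) g).1` lies in `Y` (where `x` is the second component of `z`). -/
def chartEmbed {G H A B : Type*} [Group G] [Group H]
    (γ : H → (G → A) → G) (X : Set (G → A)) (Y : Set (H → B)) : Set (G → B × A) :=
  { z | (fun g => (z g).2) ∈ X ∧
      ∀ g : G, (fun h : H => (z (chartSMul γ (fun g' => (z g').2) h g)).1) ∈ Y }

/-! ### Translation-like actions -/

/-- A translation-like action of `H` on a (finitely generated) group `G`:
a free action of `H` on the set `G` which moves points a bounded distance away,
i.e. `{ (h • g) g⁻¹ | g ∈ G }` is finite for every `h ∈ H`. -/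
def HasTranslationLikeAction (H G : Type*) [Group H] [Group G] : Prop :=
  ∃ α : H → G → G,
    (∀ g, α 1 g = g) ∧
    (∀ h₁ h₂ g, α (h₁ * h₂) g = α h₁ (α h₂ g)) ∧
    (∀ h g, α h g = g → h = 1) ∧
    ∀ h : H, (Set.range fun g => α h g * g⁻¹).Finite

/-! ### Computability notions -/

/-- A real number is upper semi-computable if some Turing machine outputs on input `n`
a rational `q_n ≥ r` with `q_n → r`. -/
def UpperSemiComputable (r : ℝ) : Prop :=
  ∃ f : ℕ → ℚ, Computable f ∧ (∀ n, r ≤ (f n : ℝ)) ∧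
    Tendsto (fun n => ((f n : ℚ) : ℝ)) atTop (𝓝 r)

/-- Evaluation of a word over a finite generating tuple (a letter is an index and a sign). -/
def evalWord {G : Type*} [Group G] {n : ℕ} (f : Fin n → G) (w : List (Fin n × Bool)) : G :=
  (w.map fun p => if p.2 then f p.1 else (f p.1)⁻¹).prod

/-- Evaluation of a word over a countable generating family. -/
def wordEval {G : Type*} [Group G] (f : ℕ → G) (w : List (ℕ × Bool)) : G :=
  (w.map fun p => if p.2 then f p.1 else (f p.1)⁻¹).prod

/-- A finitely generated group has decidable word problem if for some finite generating
tuple the set of words representing the identity is decidable. -/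
def HasDecidableWordProblem (G : Type*) [Group G] : Prop :=
  ∃ (n : ℕ) (f : Fin n → G), Subgroup.closure (Set.range f) = ⊤ ∧
    ComputablePred fun w : List (Fin n × Bool) => evalWord f w = 1

/-- A countable group admits a presentation `⟨ℕ ∣ R⟩` with decidable word problem. -/
def HasDecidableWordProblemCountable (G : Type*) [Group G] : Prop :=
  ∃ f : ℕ → G, Subgroup.closure (Set.range f) = ⊤ ∧
    ComputablePred fun w : List (ℕ × Bool) => wordEval f w = 1

/-- A group is finitely presented. -/
def IsFinitelyPresented (H : Type*) [Group H] : Prop :=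
  ∃ (n : ℕ) (rels : Set (FreeGroup (Fin n))), rels.Finite ∧
    Nonempty (PresentedGroup rels ≃* H)

/-- A pattern coding over a generating tuple of size `n`: a finite list of (word, symbol) pairs. -/
abbrev PatternCoding (n : ℕ) (A : Type*) := List (List (Fin n × Bool) × A)

/-- The pattern coded by `c` appears (somewhere) in the configuration `x`. -/
def codingAppears {G A : Type*} [Group G] {n : ℕ} (f : Fin n → G)
    (c : PatternCoding n A) (x : G → A) : Prop :=
  ∃ g : G, ∀ wa ∈ c, x (evalWord f wa.1 * g) = wa.2

/-- A `G`-subshift is effectively closed (w.r.t. a generating tuple `f`) if it is defined by a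
recursively enumerable set of forbidden pattern codings. -/
def EffectivelyClosed {G : Type*} [Group G] {A : Type} [Primcodable A] {n : ℕ}
    (f : Fin n → G) (X : Set (G → A)) : Prop :=
  ∃ e : ℕ → Option (PatternCoding n A), Computable e ∧
    X = { x | ∀ (k : ℕ) (c : PatternCoding n A), e k = some c → ¬ codingAppears f c x }

/-! ### Tilings -/

/-- The tile placed at `g` by the tiling `τ`, i.e. the set `τ(g)g` (empty if `τ(g) = ∅`). -/
def tileAt {G : Type*} [Group G] (T : Finset (Finset G))
    (τ : G → Option {S : Finset G // S ∈ T}) (g : G) : Set G :=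
  { a | ∃ S : {S : Finset G // S ∈ T}, τ g = some S ∧ ∃ t ∈ (S : Finset G), a = t * g }

/-- A tiling of `G` by the tile set `T`: the sets `τ(g)g` are pairwise disjoint and cover `G`. -/
def IsTilingBy {G : Type*} [Group G] (T : Finset (Finset G))
    (τ : G → Option {S : Finset G // S ∈ T}) : Prop :=
  (∀ g₁ g₂ : G, g₁ ≠ g₂ → Disjoint (tileAt T τ g₁) (tileAt T τ g₂)) ∧
  ∀ a : G, ∃ g : G, a ∈ tileAt T τ g

/-! ### Locally admissible patterns -/

/-- A pattern appears within a finite pattern `q` with support `K`. -/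
def Pattern.appearsInFinitePat {G A : Type*} [Group G] (p : Pattern G A)
    (K : Finset G) (q : {g // g ∈ K} → A) : Prop :=
  ∃ g : G, ∀ h : {g // g ∈ p.supp}, ∃ hk : (h : G) * g ∈ K, q ⟨(h : G) * g, hk⟩ = p.val h

/-- Locally admissible patterns with support `K` (w.r.t. the forbidden set `𝓕`). -/
def locallyAdmissible {G A : Type*} [Group G] (𝓕 : Set (Pattern G A)) (K : Finset G) :
    Set ({g // g ∈ K} → A) :=
  { q | ∀ p ∈ 𝓕, ¬ p.appearsInFinitePat K q }

/-! ### Free extensions -/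

/-- The free `G`-extension of an `H`-subshift `X`, for `H ≤ G`: all `y : G → A` such that
every map `h ↦ y(h g)` (restriction to a right `H`-coset) belongs to `X`. -/
def freeExtension {G A : Type*} [Group G] (H : Subgroup G) (X : Set (↥H → A)) :
    Set (G → A) :=
  { y | ∀ g : G, (fun h : ↥H => y ((h : G) * g)) ∈ X }

/-! ### Polycyclic groups and Perron numbers -/

/-- The quotient `A/B` (for `B ≤ A ≤ K`) is a cyclic group: `B.subgroupOf A` is normal in `A`
and there is `x ∈ A` such that every element of `A` is `xⁿ` modulo `B`. -/
def IsCyclicQuot {K : Type*} [Group K] (A B : Subgroup K) : Prop :=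
  (B.subgroupOf A).Normal ∧
    ∃ x : ↥A, ∀ y : ↥A, ∃ n : ℤ, y * (x ^ n)⁻¹ ∈ B.subgroupOf A

/-- A polycyclic series: a finite descending subnormal series from `⊤` to `⊥` with
cyclic quotients. -/
def IsPolycyclicSeries {K : Type*} [Group K] {n : ℕ} (N : Fin (n + 1) → Subgroup K) : Prop :=
  N 0 = ⊤ ∧ N (Fin.last n) = ⊥ ∧
    ∀ i : Fin n, N i.succ ≤ N i.castSucc ∧ IsCyclicQuot (N i.castSucc) (N i.succ)

/-- `G` is virtually polycyclic with Hirsch index `h`: it has a finite-index polycyclic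
subgroup, with a polycyclic series having exactly `h` infinite cyclic quotients. -/
def IsVirtuallyPolycyclicOfHirsch (G : Type*) [Group G] (h : ℕ) : Prop :=
  ∃ K : Subgroup G, K.FiniteIndex ∧
    ∃ (n : ℕ) (N : Fin (n + 1) → Subgroup ↥K), IsPolycyclicSeries N ∧
      Nat.card {i : Fin n // ((N i.succ).subgroupOf (N i.castSucc)).index = 0} = h

/-- A Perron number: a real algebraic integer `> 1` strictly larger in modulus than all of its
algebraic conjugates. -/
def IsPerronNumber (lam : ℝ) : Prop :=
  1 < lam ∧ ∃ p : Polynomial ℤ, p.Monic ∧ Polynomial.aeval lam p = 0 ∧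
    ∀ z : ℂ, Polynomial.aeval z p = 0 → z ≠ (lam : ℂ) → ‖z‖ < lam

/-!
Since `h_top(G ↷ Y)` is an infimum of `log |L_F(Y)| / |F|`, some nonempty window `F` has
`log |L_F(Y)| / |F| < h_top(G ↷ Y) + ε`. Forbidding in `X` the finitely many patterns on `F` that
do not occur in `Y` gives an SFT `Z` which still contains the shift-invariant set `Y` and satisfies
`L_F(Z) ⊆ L_F(Y)`, so `h_top(G ↷ Z) ≤ log |L_F(Z)| / |F| ≤ h_top(G ↷ Y) + ε`; the lower bound is
monotonicity of entropy.
-/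

open Real

lemma Real.log_ncard_le_log_ncard {α : Type*} {s t : Set α} (ht : t.Finite) (h : s ⊆ t) :
    log s.ncard ≤ log t.ncard := by
  rcases Nat.eq_zero_or_pos s.ncard with hs | hs
  · rw [hs, Nat.cast_zero, log_zero]
    exact log_natCast_nonneg _
  · exact log_le_log (by exact_mod_cast hs) (by exact_mod_cast Set.ncard_le_ncard h ht)

section Subshift

variable {G A : Type*} [Group G]

lemma avoidSet_union (𝓕 𝓕' : Set (Pattern G A)) :
    avoidSet (𝓕 ∪ 𝓕') = avoidSet 𝓕 ∩ avoidSet 𝓕' := by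
  ext x
  simp only [avoidSet, Set.mem_union, Set.mem_ofPred_eq, Set.mem_inter_iff, or_imp, forall_and]

lemma IsSFT.inter {X Z : Set (G → A)} (hX : IsSFT X) (hZ : IsSFT Z) : IsSFT (X ∩ Z) := by
  obtain ⟨𝓕, h𝓕, rfl⟩ := hX
  obtain ⟨𝓕', h𝓕', rfl⟩ := hZ
  exact ⟨𝓕 ∪ 𝓕', h𝓕.union h𝓕', (avoidSet_union 𝓕 𝓕').symm⟩

lemma lang_mono {X Z : Set (G → A)} (h : X ⊆ Z) (F : Finset G) : lang X F ⊆ lang Z F := by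
  rintro p ⟨x, hx, hxp⟩
  exact ⟨x, h hx, hxp⟩

def sftApprox (Y : Set (G → A)) (F : Finset G) : Set (G → A) :=
  avoidSet (Pattern.mk F '' (lang Y F)ᶜ)

lemma isSFT_sftApprox [Finite A] (Y : Set (G → A)) (F : Finset G) : IsSFT (sftApprox Y F) :=
  ⟨_, (Set.toFinite _).image _, rfl⟩

lemma subset_sftApprox {Y : Set (G → A)} (hY : ∀ g : G, ∀ y ∈ Y, shiftMul g y ∈ Y)
    (F : Finset G) : Y ⊆ sftApprox Y F := by
  rintro y hy _ ⟨p, hp, rfl⟩ ⟨g, hg⟩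
  exact hp ⟨shiftMul g y, hY g y hy, hg⟩

lemma lang_sftApprox_subset (Y : Set (G → A)) (F : Finset G) :
    lang (sftApprox Y F) F ⊆ lang Y F := by
  rintro p ⟨z, hz, hzp⟩
  by_contra hp
  exact hz _ ⟨p, hp, rfl⟩ ⟨1, fun h => by rw [mul_one]; exact hzp h⟩

lemma log_ncard_lang_div_card_mono [Finite A] {X Z : Set (G → A)} {F : Finset G}
    (h : lang X F ⊆ lang Z F) :
    log (lang X F).ncard / F.card ≤ log (lang Z F).ncard / F.card :=
  div_le_div_of_nonneg_right (log_ncard_le_log_ncard (Set.toFinite _) h) (Nat.cast_nonneg _)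

lemma bddBelow_range_log_ncard_lang_div_card (X : Set (G → A)) :
    BddBelow (Set.range fun F : {F : Finset G // F.Nonempty} =>
      log (lang X (F : Finset G)).ncard / (F : Finset G).card) := by
  refine ⟨0, ?_⟩
  rintro _ ⟨F, rfl⟩
  exact div_nonneg (log_natCast_nonneg _) (Nat.cast_nonneg _)

lemma subshiftEntropy_le_log_ncard_lang_div_card (X : Set (G → A)) {F : Finset G}
    (hF : F.Nonempty) : subshiftEntropy X ≤ log (lang X F).ncard / F.card :=
  ciInf_le (bddBelow_range_log_ncard_lang_div_card X) ⟨F, hF⟩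

lemma exists_log_ncard_lang_div_card_lt (X : Set (G → A)) {ε : ℝ} (hε : 0 < ε) :
    ∃ F : Finset G, F.Nonempty ∧ log (lang X F).ncard / F.card < subshiftEntropy X + ε := by
  have : Nonempty {F : Finset G // F.Nonempty} := ⟨⟨{1}, Finset.singleton_nonempty 1⟩⟩
  obtain ⟨⟨F, hF⟩, hlt⟩ := exists_lt_of_ciInf_lt (lt_add_of_pos_right (subshiftEntropy X) hε)
  exact ⟨F, hF, hlt⟩

lemma subshiftEntropy_mono [Finite A] {X Z : Set (G → A)} (h : X ⊆ Z) :
    subshiftEntropy X ≤ subshiftEntropy Z :=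
  ciInf_mono (bddBelow_range_log_ncard_lang_div_card X) fun F =>
    log_ncard_lang_div_card_mono (lang_mono h F)

end Subshift

theorem SFT_entropy_approximation_general {G : Type*} {A : Type*} [Group G] [Fintype A]
    (X Y : Set (G → A))
    (hX : IsSFT X) (hY : IsSubshift Y) (hYX : Y ⊆ X)
    (ε : ℝ) (hε : 0 < ε) :
    ∃ Z : Set (G → A), IsSFT Z ∧ Y ⊆ Z ∧ Z ⊆ X ∧
      subshiftEntropy Y ≤ subshiftEntropy Z ∧
      subshiftEntropy Z ≤ subshiftEntropy Y + ε := by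
  obtain ⟨F, hF, hFε⟩ := exists_log_ncard_lang_div_card_lt Y hε
  have hYZ : Y ⊆ X ∩ sftApprox Y F := Set.subset_inter hYX (subset_sftApprox hY.2 F)
  refine ⟨X ∩ sftApprox Y F, hX.inter (isSFT_sftApprox Y F), hYZ, Set.inter_subset_left,
    subshiftEntropy_mono hYZ, ?_⟩
  calc subshiftEntropy (X ∩ sftApprox Y F)
      ≤ log (lang (X ∩ sftApprox Y F) F).ncard / F.card :=
        subshiftEntropy_le_log_ncard_lang_div_card _ hF
    _ ≤ log (lang Y F).ncard / F.card := log_ncard_lang_div_card_mono <|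
        (lang_mono Set.inter_subset_right F).trans (lang_sftApprox_subset Y F)
    _ ≤ subshiftEntropy Y + ε := hFε.le

/-- If `X` is a `G`-SFT over a countable amenable group and `Y ⊆ X` is a subshift, then for
every `ε > 0` there is a `G`-SFT `Z` with `Y ⊆ Z ⊆ X` and
`h_top(G ↷ Y) ≤ h_top(G ↷ Z) ≤ h_top(G ↷ Y) + ε`. -/
theorem SFT_entropy_approximation {G : Type*} {A : Type*} [Group G] [Countable G] [Fintype A]
    (hG : IsAmenable G) (X Y : Set (G → A))
    (hX : IsSFT X) (hY : IsSubshift Y) (hYX : Y ⊆ X)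
    (ε : ℝ) (hε : 0 < ε) :
    ∃ Z : Set (G → A), IsSFT Z ∧ Y ⊆ Z ∧ Z ⊆ X ∧
      subshiftEntropy Y ≤ subshiftEntropy Z ∧
      subshiftEntropy Z ≤ subshiftEntropy Y + ε :=
  SFT_entropy_approximation_general X Y hX hY hYX ε hε
end

section
/- Let H and G be finitely generated groups such that (1) H admits a translation-like action on G, (2) H is finitely presented, and (3) there exists a non-empty H-SFT on which the H-shift action is free. Then there exists a free G-chart (X, γ) of H such that X is a non-empty G-SFT. -/
open Filter Topology

/-!
Choose a finite presentation `⟨S | R⟩` of `H`. The translation-like action moves points by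
displacements `s • g * g⁻¹` (`s ∈ S^{±1}`) lying in a finite set, so a finite alphabet can record
them at every `g ∈ G`, next to a symbol of the free `H`-SFT `Z`. Composing recorded displacements
along a word gives a cocycle on words; the local rules that `s s⁻¹` and every relator have
trivial displacement make it descend to a cocycle `γ` of `H`, and continuity holds because
`γ(h, ·)` only looks at a bounded window. A third local rule forbids the patterns of `Z` along
each `γ`-orbit, so every orbit carries a point of `Z`, and freeness of the shift on `Z` makes
the chart free. Finally, recording the given action, with a point of `Z` copied onto each orbit
through an `H`-equivariant map `G → H`, is a configuration of this SFT.
-/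

open Pointwise

theorem shiftMul_shiftMul {G A : Type*} [Group G] (a b : G) (x : G → A) :
    shiftMul a (shiftMul b x) = shiftMul (a * b) x :=
  funext fun _ => by simp [shiftMul, mul_assoc]

@[simp]
theorem shiftMul_one {G A : Type*} [Group G] (x : G → A) : shiftMul (1 : G) x = x :=
  funext fun _ => by simp [shiftMul]

theorem avoidSet_isSubshift {G A : Type*} [Group G] (𝓕 : Set (Pattern G A)) :
    IsSubshift (avoidSet 𝓕) := by
  constructor
  · let _ : TopologicalSpace A := ⊥
    have : DiscreteTopology A := ⟨rfl⟩
    rw [← isOpen_compl_iff]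
    have hc : (avoidSet 𝓕)ᶜ = ⋃ p ∈ 𝓕, ⋃ g : G,
        ⋂ h : {a // a ∈ p.supp}, (fun x : G → A => x ((h : G) * g)) ⁻¹' {p.val h} := by
      ext x
      simp [avoidSet, Pattern.appearsIn]
    rw [hc]
    exact isOpen_biUnion fun p _ => isOpen_iUnion fun g => isOpen_iInter_of_finite fun h =>
      (continuous_apply _).isOpen_preimage _ (isOpen_discrete _)
  · rintro g x hx p hp ⟨g', hg'⟩
    exact hx p hp ⟨g' * g, fun h => by simpa [shiftMul, mul_assoc] using hg' h⟩

theorem IsSFT.isSubshift {G A : Type*} [Group G] {X : Set (G → A)} (hX : IsSFT X) :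
    IsSubshift X := by
  obtain ⟨𝓕, -, rfl⟩ := hX
  exact avoidSet_isSubshift 𝓕

theorem isSFT_setOf_forall_shiftMul {G A : Type*} [Group G] [Finite A] (F : Finset G)
    {P : (G → A) → Prop} (hP : ∀ x y : G → A, (∀ a ∈ F, x a = y a) → (P x ↔ P y)) :
    IsSFT {x | ∀ g : G, P (shiftMul g x)} := by
  refine ⟨{p | ∃ y, ¬ P y ∧ p = ⟨F, fun a => y a⟩}, ?_, ?_⟩
  · exact (Set.finite_range (Pattern.mk F)).subset (by rintro _ ⟨y, -, rfl⟩; exact ⟨_, rfl⟩)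
  ext x
  simp only [Set.mem_ofPred_eq, avoidSet, Pattern.appearsIn]
  constructor
  · rintro hx _ ⟨y, hy, rfl⟩ ⟨g, hg⟩
    exact hy ((hP _ _ fun a ha => hg ⟨a, ha⟩).1 (hx g))
  · intro hx g
    by_contra hg
    exact hx _ ⟨shiftMul g x, hg, rfl⟩ ⟨g, fun _ => rfl⟩

theorem continuous_of_forall_eq_on_finset {G A Y : Type*} [TopologicalSpace A]
    [DiscreteTopology A] [TopologicalSpace Y] (F : Finset G) {f : (G → A) → Y}
    (hf : ∀ x y : G → A, (∀ a ∈ F, x a = y a) → f x = f y) : Continuous f := by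
  refine IsLocallyConstant.continuous ((IsLocallyConstant.iff_eventually_eq f).2 fun x => ?_)
  have hnear : ∀ᶠ y in 𝓝 x, ∀ a ∈ F, y a = x a :=
    (Filter.eventually_all_finset F).2 fun a _ =>
      (continuous_apply a).continuousAt.eventually ((isOpen_discrete {x a}).mem_nhds rfl)
  exact hnear.mono fun y hy => hf y x hy

theorem FreeGroup.mk_pair_eq_one {α : Type*} (l : α × Bool) :
    FreeGroup.mk [l, (l.1, !l.2)] = 1 :=
  Quot.sound (FreeGroup.Red.Step.not (L₁ := []) (L₂ := []))

theorem MulAction.exists_equivariant_of_free {G H : Type*} [Group H] [MulAction H G]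
    (hfree : ∀ (h : H) (g : G), h • g = g → h = 1) :
    ∃ c : G → H, ∀ (h : H) (g : G), c (h • g) = h * c g := by
  have hrep : ∀ g : G, ∃ h : H, h • (Quotient.mk (orbitRel H G) g).out = g := fun g =>
    (orbitRel H G).symm (Quotient.mk_out (s := orbitRel H G) g)
  choose c hc using hrep
  refine ⟨c, fun h g => ?_⟩
  have hq : Quotient.mk (orbitRel H G) (h • g) = Quotient.mk (orbitRel H G) g :=
    Quotient.sound ⟨h, rfl⟩
  have hfix := hc (h • g)
  rw [hq] at hfix
  conv_rhs at hfix => rw [← hc g, smul_smul]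
  have := hfree ((h * c g)⁻¹ * c (h • g)) (Quotient.mk (orbitRel H G) g).out
    (by rw [mul_smul, hfix, inv_smul_smul])
  rwa [inv_mul_eq_one, eq_comm] at this

def IsCocycleOn {G K A : Type*} [Group G] [Group K] (X : Set (G → A))
    (c : K → (G → A) → G) : Prop :=
  ∀ k₁ k₂ : K, ∀ x ∈ X, c (k₁ * k₂) x = c k₁ (shiftMul (c k₂ x) x) * c k₂ x

namespace IsCocycleOn

variable {G K A : Type*} [Group G] [Group K] {X : Set (G → A)} {c : K → (G → A) → G}

def ker (hc : IsCocycleOn X c) (h1 : ∀ x ∈ X, c 1 x = 1) : Subgroup K where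
  carrier := {k | ∀ x ∈ X, c k x = 1}
  one_mem' := h1
  mul_mem' {a b} ha hb x hx := by rw [hc a b x hx, hb x hx, shiftMul_one, ha x hx, one_mul]
  inv_mem' {a} ha x hx := by
    have h := hc a⁻¹ a x hx
    rwa [inv_mul_cancel, h1 x hx, ha x hx, shiftMul_one, mul_one, eq_comm] at h

theorem ker_normal (hc : IsCocycleOn X c) (h1 : ∀ x ∈ X, c 1 x = 1)
    (hX : ∀ g, ∀ x ∈ X, shiftMul g x ∈ X) : (hc.ker h1).Normal where
  conj_mem k hk u x hx := by
    have hku : c (k * u⁻¹) x = c u⁻¹ x := by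
      rw [hc _ _ x hx, hk _ (hX _ x hx), one_mul]
    rw [mul_assoc, hc _ _ x hx, hku, ← hc _ _ x hx, mul_inv_cancel, h1 x hx]

theorem eq_of_inv_mul_mem_ker (hc : IsCocycleOn X c) (h1 : ∀ x ∈ X, c 1 x = 1) {k₁ k₂ : K}
    (hk : k₁⁻¹ * k₂ ∈ hc.ker h1) {x : G → A} (hx : x ∈ X) : c k₁ x = c k₂ x := by
  have h := hc k₁ (k₁⁻¹ * k₂) x hx
  rw [mul_inv_cancel_left, hk x hx, shiftMul_one, mul_one] at h
  exact h.symm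

theorem comp_section (hc : IsCocycleOn X c) (h1 : ∀ x ∈ X, c 1 x = 1) {H : Type*} [Group H]
    {π : K →* H} (hπ : π.ker ≤ hc.ker h1) {σ : H → K} (hσ : ∀ h, π (σ h) = h) :
    IsCocycleOn X (c ∘ σ) := by
  intro h₁ h₂ x hx
  simp only [Function.comp_apply]
  have hker : (σ (h₁ * h₂))⁻¹ * (σ h₁ * σ h₂) ∈ π.ker := by
    simp [MonoidHom.mem_ker, hσ]
  rw [hc.eq_of_inv_mul_mem_ker h1 (hπ hker) hx, hc _ _ x hx]

theorem chartSMul_mul (hc : IsCocycleOn X c) (hX : ∀ g, ∀ x ∈ X, shiftMul g x ∈ X)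
    {x : G → A} (hx : x ∈ X) (k₁ k₂ : K) (g : G) :
    chartSMul c x (k₁ * k₂) g = chartSMul c x k₁ (chartSMul c x k₂ g) := by
  unfold chartSMul
  rw [hc k₁ k₂ _ (hX g x hx), shiftMul_shiftMul, mul_assoc]

end IsCocycleOn

def orbitRead {G H C B : Type*} [Group G] [Group H] (γ : H → (G → C × B) → G)
    (x : G → C × B) (g : G) : H → B :=
  fun k => (x (chartSMul γ x k g)).2

theorem orbitRead_shiftMul {G H C B : Type*} [Group G] [Group H] (γ : H → (G → C × B) → G)
    (x : G → C × B) (g : G) : orbitRead γ (shiftMul g x) 1 = orbitRead γ x g := by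
  funext k
  simp [orbitRead, chartSMul, shiftMul]

theorem orbitRead_one_apply {G H C B : Type*} [Group G] [Group H] (γ : H → (G → C × B) → G)
    (x : G → C × B) (k : H) : orbitRead γ x 1 k = (x (γ k x)).2 := by
  simp [orbitRead, chartSMul]

theorem IsCocycleOn.shiftMul_orbitRead {G H C B : Type*} [Group G] [Group H]
    {X : Set (G → C × B)} {γ : H → (G → C × B) → G} (hγ : IsCocycleOn X γ)
    (hX : ∀ g, ∀ x ∈ X, shiftMul g x ∈ X) {x : G → C × B} (hx : x ∈ X) (h : H) (g : G) :
    shiftMul h (orbitRead γ x g) = orbitRead γ x (chartSMul γ x h g) :=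
  funext fun k => by simp only [shiftMul, orbitRead, hγ.chartSMul_mul hX hx]

def wordCocycle {G A L : Type*} [Group G] (d : L → (G → A) → G) : List L → (G → A) → G
  | [], _ => 1
  | l :: w, x => d l (shiftMul (wordCocycle d w x) x) * wordCocycle d w x

section WordCocycle

variable {G A L : Type*} [Group G] (d : L → (G → A) → G)

@[simp]
theorem wordCocycle_nil (x : G → A) : wordCocycle d [] x = 1 := rfl

theorem wordCocycle_cons (l : L) (w : List L) (x : G → A) :
    wordCocycle d (l :: w) x = d l (shiftMul (wordCocycle d w x) x) * wordCocycle d w x := rfl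

theorem wordCocycle_append (w₁ w₂ : List L) (x : G → A) :
    wordCocycle d (w₁ ++ w₂) x =
      wordCocycle d w₁ (shiftMul (wordCocycle d w₂ x) x) * wordCocycle d w₂ x := by
  induction w₁ with
  | nil => simp
  | cons l w ih => rw [List.cons_append, wordCocycle_cons, wordCocycle_cons, ih,
      shiftMul_shiftMul, mul_assoc]

variable [DecidableEq G] {D : Finset G}

theorem wordCocycle_mem_pow (hD : ∀ l x, d l x ∈ D) (w : List L) (x : G → A) :
    wordCocycle d w x ∈ D ^ w.length := by
  induction w with
  | nil => simp
  | cons l w ih =>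
    rw [List.length_cons, pow_succ']
    exact Finset.mul_mem_mul (hD _ _) ih

theorem wordCocycle_congr (hD1 : 1 ∈ D) (hD : ∀ l x, d l x ∈ D)
    (hd : ∀ l x y, x 1 = y 1 → d l x = d l y) {w : List L} {k : ℕ} (hk : w.length ≤ k)
    {x y : G → A} (hxy : ∀ a ∈ D ^ k, x a = y a) : wordCocycle d w x = wordCocycle d w y := by
  induction w with
  | nil => rfl
  | cons l w ih =>
    have hw : w.length ≤ k := (Nat.le_succ _).trans hk
    rw [wordCocycle_cons, wordCocycle_cons, ih hw]
    congr 1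
    refine hd l _ _ ?_
    simp only [shiftMul, one_mul]
    exact hxy _ (Finset.pow_subset_pow_right hD1 hw (wordCocycle_mem_pow d hD w y))

end WordCocycle

section FreeCocycle

variable {G A α : Type*} [Group G] (d : α × Bool → (G → A) → G)

theorem wordCocycle_eq_of_red {x : G → A}
    (hx : ∀ g l, wordCocycle d [l, (l.1, !l.2)] (shiftMul g x) = 1)
    {w₁ w₂ : List (α × Bool)} (h : FreeGroup.Red w₁ w₂) :
    wordCocycle d w₁ x = wordCocycle d w₂ x := by
  induction h with
  | refl => rfl
  | tail _ hstep ih =>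
    rw [ih]
    obtain @⟨u, v, i, b⟩ := hstep
    rw [show u ++ (i, b) :: (i, !b) :: v = u ++ ([(i, b), (i, !b)] ++ v) from rfl,
      wordCocycle_append, wordCocycle_append d _ v, hx, one_mul, ← wordCocycle_append]

variable [DecidableEq α]

def freeCocycle (z : FreeGroup α) (x : G → A) : G := wordCocycle d z.toWord x

theorem freeCocycle_one (x : G → A) : freeCocycle d 1 x = 1 := by
  simp [freeCocycle]

theorem freeCocycle_mk {x : G → A}
    (hx : ∀ g l, wordCocycle d [l, (l.1, !l.2)] (shiftMul g x) = 1) (w : List (α × Bool)) :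
    freeCocycle d (FreeGroup.mk w) x = wordCocycle d w x := by
  rw [freeCocycle, FreeGroup.toWord_mk]
  exact (wordCocycle_eq_of_red d hx FreeGroup.reduce.red).symm

theorem isCocycleOn_freeCocycle {X : Set (G → A)}
    (hX : ∀ x ∈ X, ∀ g l, wordCocycle d [l, (l.1, !l.2)] (shiftMul g x) = 1) :
    IsCocycleOn X (freeCocycle d) := by
  intro z₁ z₂ x hx
  have h := freeCocycle_mk d (hX x hx) (z₁.toWord ++ z₂.toWord)
  rwa [← FreeGroup.mul_mk, FreeGroup.mk_toWord, FreeGroup.mk_toWord, wordCocycle_append] at h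

theorem continuous_freeCocycle [TopologicalSpace A] [DiscreteTopology A] [TopologicalSpace G]
    (D : Finset G) (hD : ∀ l x, d l x ∈ D) (hd : ∀ l x y, x 1 = y 1 → d l x = d l y)
    (z : FreeGroup α) : Continuous (freeCocycle d z) := by
  classical
  have hD' : ∀ l x, d l x ∈ insert 1 D := fun l x => Finset.mem_insert_of_mem (hD l x)
  exact continuous_of_forall_eq_on_finset _ fun x y hxy =>
    wordCocycle_congr d (Finset.mem_insert_self 1 D) hD' hd le_rfl hxy

end FreeCocycle

section ChartSFT

variable {G H C B α : Type*} [Group G] [Group H] [DecidableEq α]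
  (d : α × Bool → (G → C × B) → G) (σ : H → FreeGroup α)
  (rels : Finset (FreeGroup α)) (𝓕 : Finset (Pattern H B))

def chartRule (y : G → C × B) : Prop :=
  (∀ l : α × Bool, wordCocycle d [l, (l.1, !l.2)] y = 1) ∧
  (∀ r ∈ rels, freeCocycle d r y = 1) ∧
  ∀ p ∈ 𝓕, ¬ ∀ k : {k // k ∈ p.supp}, orbitRead (freeCocycle d ∘ σ) y 1 k = p.val k

def chartSFT : Set (G → C × B) := {x | ∀ g : G, chartRule d σ rels 𝓕 (shiftMul g x)}

variable {d σ rels 𝓕}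

theorem shiftMul_mem_chartSFT (g : G) (x : G → C × B) (hx : x ∈ chartSFT d σ rels 𝓕) :
    shiftMul g x ∈ chartSFT d σ rels 𝓕 := fun g' => by
  rw [shiftMul_shiftMul]
  exact hx _

theorem isSFT_chartSFT [Finite C] [Finite B] (D : Finset G) (hD : ∀ l x, d l x ∈ D)
    (hd : ∀ l x y, x 1 = y 1 → d l x = d l y) : IsSFT (chartSFT d σ rels 𝓕) := by
  classical
  set N := 2 + rels.sup (fun r => r.toWord.length) +
    𝓕.sup fun p => p.supp.sup fun k => (σ k).toWord.length
  have hD1 : (1 : G) ∈ insert 1 D := Finset.mem_insert_self 1 D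
  have hD' : ∀ l x, d l x ∈ insert 1 D := fun l x => Finset.mem_insert_of_mem (hD l x)
  refine isSFT_setOf_forall_shiftMul (insert 1 D ^ N) fun x y hxy => ?_
  have hcongr : ∀ w : List (α × Bool), w.length ≤ N →
      wordCocycle d w x = wordCocycle d w y := fun w hw =>
    wordCocycle_congr d hD1 hD' hd hw hxy
  have hread : ∀ p ∈ 𝓕, ∀ k ∈ p.supp, orbitRead (freeCocycle d ∘ σ) x 1 k =
      orbitRead (freeCocycle d ∘ σ) y 1 k := by
    intro p hp k hk
    have hw : (σ k).toWord.length ≤ N := by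
      have := (Finset.le_sup (f := fun k => (σ k).toWord.length) hk).trans
        (Finset.le_sup (f := fun p => p.supp.sup fun k => (σ k).toWord.length) hp)
      omega
    simp only [orbitRead_one_apply, Function.comp_apply, freeCocycle, hcongr _ hw]
    rw [hxy _ (Finset.pow_subset_pow_right hD1 hw (wordCocycle_mem_pow d hD' _ y))]
  refine and_congr
    (forall_congr' fun l => by rw [hcongr [l, (l.1, !l.2)] (show 2 ≤ N by omega)]) <|
    and_congr (forall₂_congr fun r hr => ?_) (forall₂_congr fun p hp => ?_)
  · have := Finset.le_sup (f := fun r => r.toWord.length) hr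
    rw [freeCocycle, freeCocycle, hcongr _ (by omega)]
  · exact not_congr (forall_congr' fun k => by rw [hread p hp k k.2])

variable {π : FreeGroup α →* H}

theorem isCocycleOn_chartSFT (hσ : ∀ h, π (σ h) = h)
    (hker : π.ker ≤ Subgroup.normalClosure (rels : Set (FreeGroup α))) :
    IsCocycleOn (chartSFT d σ rels 𝓕) (freeCocycle d ∘ σ) := by
  have hc : IsCocycleOn (chartSFT d σ rels 𝓕) (freeCocycle d) :=
    isCocycleOn_freeCocycle d fun x hx g => (hx g).1
  have h1 : ∀ x ∈ chartSFT d σ rels 𝓕, freeCocycle d 1 x = 1 := fun x _ => freeCocycle_one d x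
  have := hc.ker_normal h1 shiftMul_mem_chartSFT
  have hrels : Subgroup.normalClosure (rels : Set (FreeGroup α)) ≤ hc.ker h1 :=
    Subgroup.normalClosure_le_normal fun r hr x hx => by simpa using (hx 1).2.1 r hr
  exact hc.comp_section h1 (hker.trans hrels) hσ

theorem orbitRead_mem_avoidSet (hσ : ∀ h, π (σ h) = h)
    (hker : π.ker ≤ Subgroup.normalClosure (rels : Set (FreeGroup α)))
    {x : G → C × B} (hx : x ∈ chartSFT d σ rels 𝓕) (g : G) :
    orbitRead (freeCocycle d ∘ σ) x g ∈ avoidSet (𝓕 : Set (Pattern H B)) := by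
  rintro p hp ⟨k, hk⟩
  apply (hx (chartSMul (freeCocycle d ∘ σ) x k g)).2.2 p hp
  rw [orbitRead_shiftMul,
    ← (isCocycleOn_chartSFT hσ hker).shiftMul_orbitRead shiftMul_mem_chartSFT hx]
  exact fun h => hk h

theorem eq_one_of_chartSMul_eq_self (hσ : ∀ h, π (σ h) = h)
    (hker : π.ker ≤ Subgroup.normalClosure (rels : Set (FreeGroup α)))
    (hZ : ∀ z ∈ avoidSet (𝓕 : Set (Pattern H B)), ∀ h, shiftMul h z = z → h = 1)
    {x : G → C × B} (hx : x ∈ chartSFT d σ rels 𝓕) {h : H} {g : G}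
    (hfix : chartSMul (freeCocycle d ∘ σ) x h g = g) : h = 1 := by
  refine hZ _ (orbitRead_mem_avoidSet hσ hker hx g) h ?_
  rw [(isCocycleOn_chartSFT hσ hker).shiftMul_orbitRead shiftMul_mem_chartSFT hx, hfix]

theorem isFreeChart_chartSFT [Finite C] [Finite B] (D : Finset G) (hD : ∀ l x, d l x ∈ D)
    (hd : ∀ l x y, x 1 = y 1 → d l x = d l y) (hσ : ∀ h, π (σ h) = h)
    (hker : π.ker ≤ Subgroup.normalClosure (rels : Set (FreeGroup α)))
    (hZ : ∀ z ∈ avoidSet (𝓕 : Set (Pattern H B)), ∀ h, shiftMul h z = z → h = 1) :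
    IsFreeChart (chartSFT d σ rels 𝓕) (freeCocycle d ∘ σ) :=
  ⟨⟨(isSFT_chartSFT D hD hd).isSubshift,
      fun h => by
        let _ : TopologicalSpace (C × B) := ⊥
        have : DiscreteTopology (C × B) := ⟨rfl⟩
        let _ : TopologicalSpace G := ⊥
        exact (continuous_freeCocycle d D hD hd (σ h)).continuousOn,
      isCocycleOn_chartSFT hσ hker⟩,
    fun _ hx _ _ => eq_one_of_chartSMul_eq_self hσ hker hZ hx⟩

end ChartSFT

def codeDisp {G α E B : Type*} [Group G] (dec : E → G) (l : α × Bool)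
    (x : G → (α × Bool → E) × B) : G :=
  dec ((x 1).1 l)

theorem codeDisp_mem_toFinset {G α E B : Type*} [Group G] [Finite E] (dec : E → G)
    (l : α × Bool) (x : G → (α × Bool → E) × B) :
    codeDisp dec l x ∈ (Set.finite_range dec).toFinset := by
  simp [codeDisp]

theorem codeDisp_congr {G α E B : Type*} [Group G] (dec : E → G) (l : α × Bool)
    (x y : G → (α × Bool → E) × B) (hxy : x 1 = y 1) : codeDisp dec l x = codeDisp dec l y := by
  rw [codeDisp, hxy, codeDisp]

theorem chartSFT_codeDisp_nonempty {G H α E B : Type*} [Group G] [Group H] [MulAction H G]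
    [DecidableEq α] {dec : E → G} {σ : H → FreeGroup α} {rels : Finset (FreeGroup α)}
    {𝓕 : Finset (Pattern H B)} {π : FreeGroup α →* H} (hσ : ∀ h, π (σ h) = h)
    (hrels : ∀ r ∈ rels, π r = 1) (hfree : ∀ (h : H) (g : G), h • g = g → h = 1)
    (hdisp : ∀ l g, ∃ e, dec e = π (FreeGroup.mk [l]) • g * g⁻¹)
    {z : H → B} (hz : z ∈ avoidSet (𝓕 : Set (Pattern H B))) :
    (chartSFT (codeDisp dec) σ rels 𝓕).Nonempty := by
  choose code hcode using hdisp
  obtain ⟨c, hc⟩ := MulAction.exists_equivariant_of_free hfree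
  set x : G → (α × Bool → E) × B := fun g => (fun l => code l g, z (c g))
  have hword : ∀ w g, wordCocycle (codeDisp dec) w (shiftMul g x) =
      π (FreeGroup.mk w) • g * g⁻¹ := by
    intro w g
    induction w with
    | nil => simp [← FreeGroup.one_eq_mk]
    | cons l w ih =>
      rw [wordCocycle_cons, ih, shiftMul_shiftMul, inv_mul_cancel_right,
        show l :: w = [l] ++ w from rfl, ← FreeGroup.mul_mk, map_mul, mul_smul]
      simp only [codeDisp, shiftMul, one_mul, x, hcode, mul_assoc, inv_mul_cancel_left]
  have hfreeCocycle : ∀ u g, freeCocycle (codeDisp dec) u (shiftMul g x) = π u • g * g⁻¹ :=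
    fun u g => by rw [freeCocycle, hword, FreeGroup.mk_toWord]
  refine ⟨x, fun g => ⟨fun l => ?_, fun r hr => ?_, fun p hp hpat => hz p hp ⟨c g, fun k => ?_⟩⟩⟩
  · rw [hword, FreeGroup.mk_pair_eq_one, map_one, one_smul, mul_inv_cancel]
  · rw [hfreeCocycle, hrels r hr, one_smul, mul_inv_cancel]
  · rw [← hpat k, orbitRead_shiftMul]
    simp only [orbitRead, chartSMul, Function.comp_apply, hfreeCocycle, hσ, inv_mul_cancel_right,
      x, hc]

theorem IsFinitelyPresented.exists_presentation {H : Type*} [Group H]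
    (hH : IsFinitelyPresented H) :
    ∃ (n : ℕ) (π : FreeGroup (Fin n) →* H) (rels : Finset (FreeGroup (Fin n))),
      Function.Surjective π ∧ π.ker = Subgroup.normalClosure (rels : Set (FreeGroup (Fin n))) := by
  obtain ⟨n, rels, hrels, ⟨φ⟩⟩ := hH
  refine ⟨n, (φ : PresentedGroup rels →* H).comp (PresentedGroup.mk rels), hrels.toFinset,
    φ.surjective.comp (PresentedGroup.mk_surjective rels), ?_⟩
  ext r
  rw [MonoidHom.ker_mulEquiv_comp, MonoidHom.mem_ker, PresentedGroup.mk_eq_one_iff,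
    hrels.coe_toFinset]

theorem exists_free_SFT_chart_general {G H : Type*} [Group G] [Group H]
    (h1 : HasTranslationLikeAction H G)
    (h2 : IsFinitelyPresented H)
    (h3 : ∃ (B : Type) (_ : Fintype B) (Z : Set (H → B)), IsSFT Z ∧ Z.Nonempty ∧
      ∀ z ∈ Z, ∀ h : H, shiftMul h z = z → h = 1) :
    ∃ (A : Type) (_ : Fintype A) (X : Set (G → A)) (γ : H → (G → A) → G),
      IsFreeChart X γ ∧ IsSFT X ∧ X.Nonempty := by
  obtain ⟨act, act_one, act_mul, act_free, act_bdd⟩ := h1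
  let _ : MulAction H G := { smul := act, one_smul := act_one, mul_smul := act_mul }
  obtain ⟨n, π, rels, hπ, hker⟩ := h2.exists_presentation
  obtain ⟨B, _, Z, ⟨𝓕, h𝓕, rfl⟩, ⟨z, hz⟩, hZfree⟩ := h3
  obtain ⟨m, dec, hdec⟩ := (Set.finite_iUnion fun l : Fin n × Bool =>
    act_bdd (π (FreeGroup.mk [l]))).fin_embedding
  have hdisp : ∀ l g, ∃ e, dec e = π (FreeGroup.mk [l]) • g * g⁻¹ := fun l g => by
    rw [← Set.mem_range, hdec]
    exact Set.mem_iUnion.2 ⟨l, g, rfl⟩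
  have hσ := Function.surjInv_eq hπ
  have hD := codeDisp_mem_toFinset (α := Fin n) (B := B) dec
  have hd := codeDisp_congr (α := Fin n) (B := B) dec
  rw [← h𝓕.coe_toFinset] at hz hZfree
  exact ⟨_, inferInstance, chartSFT (codeDisp dec) (Function.surjInv hπ) rels h𝓕.toFinset, _,
    isFreeChart_chartSFT _ hD hd hσ hker.le hZfree,
    isSFT_chartSFT _ hD hd,
    chartSFT_codeDisp_nonempty hσ
      (fun r hr => MonoidHom.mem_ker.1 (hker.ge (Subgroup.subset_normalClosure hr))) act_free
      hdisp hz⟩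

/-- If `H, G` are finitely generated, `H` acts translation-like on `G`, `H` is finitely
presented and there is a non-empty `H`-SFT with free shift action, then there is a free
`G`-chart `(X, γ)` of `H` with `X` a non-empty `G`-SFT. -/
theorem exists_free_SFT_chart {G H : Type*} [Group G] [Group H]
    (hGfg : Group.FG G) (hHfg : Group.FG H)
    (h1 : HasTranslationLikeAction H G)
    (h2 : IsFinitelyPresented H)
    (h3 : ∃ (B : Type) (_ : Fintype B) (Z : Set (H → B)), IsSFT Z ∧ Z.Nonempty ∧
      ∀ z ∈ Z, ∀ h : H, shiftMul h z = z → h = 1) :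
    ∃ (A : Type) (_ : Fintype A) (X : Set (G → A)) (γ : H → (G → A) → G),
      IsFreeChart X γ ∧ IsSFT X ∧ X.Nonempty :=
  exists_free_SFT_chart_general h1 h2 h3
end

section
/- Let G be a countable group and let X = X_𝓕 ⊂ Σ^G be the subshift defined by a (possibly infinite) set of forbidden patterns 𝓕. For every finite subset F ⊂ G there exists a finite subset K ⊂ G with K ⊇ F such that a pattern p ∈ Σ^F belongs to L_F(X) if and only if there exists a locally admissible pattern q ∈ L^loc_K(X_𝓕) with q|_F = p. -/
open Filter Topology

/-!
A pattern on `F` outside the language of `X_𝓕` already fails to extend to a locally admissible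
pattern on some finite window `K_p ⊇ F`: otherwise the configurations whose restrictions to
larger and larger windows are locally admissible and extend `p` form a directed family of
nonempty closed sets in the compact space `A^G`, and a point of their intersection lies in
`X_𝓕` and extends `p`. Since there are only finitely many patterns on `F`, the union of the
windows `K_p` works for all of them at once.
-/

theorem Finset.restrict_surjective {ι A : Type*} [Nonempty A] (s : Finset ι) :
    Function.Surjective (s.restrict (π := fun _ => A)) := by
  classical
  intro q
  refine ⟨fun i => if h : i ∈ s then q ⟨i, h⟩ else Classical.arbitrary A, ?_⟩
  funext i
  exact dif_pos i.2

section LocallyAdmissible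

variable {G A : Type*} [Group G] {𝓕 : Set (Pattern G A)}

theorem restrict₂_mem_locallyAdmissible {K K' : Finset G} (hKK : K' ⊆ K)
    {q : {g // g ∈ K} → A} (hq : q ∈ locallyAdmissible 𝓕 K) :
    Finset.restrict₂ (π := fun _ => A) hKK q ∈ locallyAdmissible 𝓕 K' := by
  rintro P hP ⟨g, hg⟩
  refine hq P hP ⟨g, fun h => ?_⟩
  obtain ⟨hk, hv⟩ := hg h
  exact ⟨hKK hk, hv⟩

theorem mem_avoidSet_iff_forall_restrict_mem_locallyAdmissible {x : G → A} :
    x ∈ avoidSet 𝓕 ↔ ∀ K : Finset G, K.restrict x ∈ locallyAdmissible 𝓕 K := by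
  classical
  constructor
  · rintro hx K P hP ⟨g, hg⟩
    exact hx P hP ⟨g, fun h => (hg h).choose_spec⟩
  · rintro hx P hP ⟨g, hg⟩
    refine hx (P.supp.image (· * g)) P hP ⟨g, fun h => ?_⟩
    exact ⟨Finset.mem_image_of_mem _ h.2, hg h⟩

theorem mem_lang_avoidSet_of_forall_extends [Finite A] {F : Finset G}
    {p : {g // g ∈ F} → A}
    (H : ∀ (K : Finset G) (hFK : F ⊆ K),
      ∃ q ∈ locallyAdmissible 𝓕 K, Finset.restrict₂ (π := fun _ => A) hFK q = p) :
    p ∈ lang (avoidSet 𝓕) F := by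
  classical
  let _ : TopologicalSpace A := ⊥
  have : DiscreteTopology A := ⟨rfl⟩
  have : Nonempty A := by
    obtain ⟨q, -, -⟩ := H (insert 1 F) (Finset.subset_insert 1 F)
    exact ⟨q ⟨1, Finset.mem_insert_self 1 F⟩⟩
  let C : Finset G → Set (G → A) := fun K =>
    K.restrict ⁻¹' locallyAdmissible 𝓕 K ∩ F.restrict ⁻¹' {p}
  have hC_closed : ∀ K, IsClosed (C K) := fun K =>
    ((isClosed_discrete _).preimage (Finset.continuous_restrict K)).inter
      ((isClosed_discrete _).preimage (Finset.continuous_restrict F))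
  have hC_anti : ∀ {K K'}, K ⊆ K' → C (K' ∪ F) ⊆ C K := by
    intro K K' hKK' x ⟨hx, hxp⟩
    refine ⟨?_, hxp⟩
    have hsub : K ⊆ K' ∪ F := hKK'.trans Finset.subset_union_left
    rw [Set.mem_preimage, ← Finset.restrict₂_comp_restrict hsub]
    exact restrict₂_mem_locallyAdmissible hsub hx
  have hC_nonempty : ∀ K, (C K).Nonempty := by
    intro K
    obtain ⟨q, hq, hqp⟩ := H (K ∪ F) Finset.subset_union_right
    obtain ⟨x, rfl⟩ := Finset.restrict_surjective (K ∪ F) q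
    refine ⟨x, hC_anti subset_rfl ⟨hq, ?_⟩⟩
    rw [Set.mem_preimage, ← Finset.restrict₂_comp_restrict Finset.subset_union_right]
    exact hqp
  obtain ⟨x, hx⟩ := IsCompact.nonempty_iInter_of_directed_nonempty_isCompact_isClosed C
    (fun K K' => ⟨(K ∪ K') ∪ F, hC_anti Finset.subset_union_left,
      hC_anti Finset.subset_union_right⟩)
    hC_nonempty (fun K => (hC_closed K).isCompact) hC_closed
  rw [Set.mem_iInter] at hx
  refine ⟨x, mem_avoidSet_iff_forall_restrict_mem_locallyAdmissible.2 fun K => (hx K).1,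
    fun h => congrFun (hx ∅).2 h⟩

theorem exists_superset_not_extends_of_not_mem_lang [Finite A] {F : Finset G}
    {p : {g // g ∈ F} → A} (hp : p ∉ lang (avoidSet 𝓕) F) :
    ∃ (K : Finset G) (hFK : F ⊆ K),
      ∀ q ∈ locallyAdmissible 𝓕 K, Finset.restrict₂ (π := fun _ => A) hFK q ≠ p := by
  by_contra! H
  exact hp (mem_lang_avoidSet_of_forall_extends H)

end LocallyAdmissible

theorem lang_eq_restriction_of_locallyAdmissible_general
    {G : Type*} {A : Type*} [Group G] [Fintype A]
    (𝓕 : Set (Pattern G A)) (F : Finset G) :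
    ∃ (K : Finset G) (hFK : F ⊆ K),
      ∀ p : {g // g ∈ F} → A,
        p ∈ lang (avoidSet 𝓕) F ↔
          ∃ q ∈ locallyAdmissible 𝓕 K,
            ∀ h : {g // g ∈ F}, q ⟨(h : G), hFK h.2⟩ = p h := by
  classical
  have hsuperset : ∀ p : {g // g ∈ F} → A, ∃ (Kp : Finset G) (hFKp : F ⊆ Kp),
      p ∉ lang (avoidSet 𝓕) F →
        ∀ q ∈ locallyAdmissible 𝓕 Kp,
          Finset.restrict₂ (π := fun _ => A) hFKp q ≠ p := by
    intro p
    by_cases hp : p ∈ lang (avoidSet 𝓕) F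
    · exact ⟨F, subset_rfl, absurd hp⟩
    · obtain ⟨Kp, hFKp, hKp⟩ := exists_superset_not_extends_of_not_mem_lang hp
      exact ⟨Kp, hFKp, fun _ => hKp⟩
  choose Kp _ hKp using hsuperset
  refine ⟨F ∪ Finset.univ.sup Kp, Finset.subset_union_left, fun p => ⟨?_, ?_⟩⟩
  · rintro ⟨x, hx, hxp⟩
    exact ⟨_, mem_avoidSet_iff_forall_restrict_mem_locallyAdmissible.1 hx _, hxp⟩
  · rintro ⟨q, hq, hqp⟩
    by_contra hp
    have hsub : Kp p ⊆ F ∪ Finset.univ.sup Kp :=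
      (Finset.le_sup (Finset.mem_univ p)).trans Finset.subset_union_right
    exact hKp p hp _ (restrict₂_mem_locallyAdmissible hsub hq) (funext hqp)

/-- For any countable group `G`, subshift `X_𝓕 ⊆ A^G` and finite `F ⊆ G` there is a finite
`K ⊇ F` such that a pattern on `F` is in the language of `X_𝓕` iff it extends to a locally
admissible pattern on `K`. -/
theorem lang_eq_restriction_of_locallyAdmissible
    {G : Type*} {A : Type*} [Group G] [Countable G] [Fintype A]
    (𝓕 : Set (Pattern G A)) (F : Finset G) :
    ∃ (K : Finset G) (hFK : F ⊆ K),
      ∀ p : {g // g ∈ F} → A,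
        p ∈ lang (avoidSet 𝓕) F ↔
          ∃ q ∈ locallyAdmissible 𝓕 K,
            ∀ h : {g // g ∈ F}, q ⟨(h : G), hFK h.2⟩ = p h :=
  lang_eq_restriction_of_locallyAdmissible_general 𝓕 F
end

section
/- Let G₁ and G₂ be infinite finitely generated groups. Then the direct product G₁ × G₂ admits a translation-like action of ℤ². -/
open Filter Topology

/-!
By Seward's theorem each factor admits a translation-like action of `ℤ`, and the product of two
translation-like actions is a translation-like action of the product group.

For Seward's theorem, let `G` be generated by a finite symmetric set `E ∋ 1` and take a
breadth-first spanning tree of its Cayley graph, rooted at `1`. Call a vertex heavy if it has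
infinitely many descendants; the root is heavy, and every heavy vertex has a heavy child. Cutting
the heavy vertices into blocks of `m` consecutive depths, and attaching every other vertex to its
nearest heavy ancestor, partitions `G` into finite subtrees with at least `m` vertices each. The
cube of a finite tree has a Hamiltonian path from the root to a neighbour of the root
(Sekanina), so every piece carries a cycle of length at least `m` whose steps lie in `E³`.
A pointwise limit of these permutations along an ultrafilter still moves points by elements of
`E³` and has no finite cycles; its powers form the action of `ℤ`.
-/

open Equiv Function

local infixr:80 " ∘r " => Relation.Comp

theorem Function.exists_apply_iterate_eq {α : Type*} {f : α → α} {x y : α} {k : ℕ}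
    (hk : f^[k] x = y) (hxy : x ≠ y) : ∃ j < k, f (f^[j] x) = y ∧ f^[j] x ≠ y := by
  classical
  have hex : ∃ k, f^[k] x = y := ⟨k, hk⟩
  have hpos : Nat.find hex ≠ 0 := fun h => hxy (by simpa [h] using Nat.find_spec hex)
  refine ⟨Nat.find hex - 1, by have := Nat.find_min' hex hk; omega, ?_,
    Nat.find_min hex (by omega)⟩
  rw [← iterate_succ_apply' f, Nat.succ_eq_add_one, Nat.sub_add_cancel (by omega)]
  exact Nat.find_spec hex

namespace List

variable {α : Type*} [DecidableEq α] {l : List α}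

theorem rel_formPerm_apply {R : α → α → Prop} (hl : l.Nodup) (hchain : l.IsChain R)
    (hwrap : ∀ a ∈ l.getLast?, ∀ b ∈ l.head?, R a b) {x : α} (hx : x ∈ l) :
    R x (l.formPerm x) := by
  obtain ⟨i, hi, rfl⟩ := getElem_of_mem hx
  rw [formPerm_apply_getElem _ hl]
  rcases Nat.lt_or_ge (i + 1) l.length with h | h
  · simp only [Nat.mod_eq_of_lt h]
    exact hchain.getElem i h
  · have hlast : i + 1 = l.length := by omega
    simp only [hlast, Nat.mod_self]
    apply hwrap
    · simp [getLast?_eq_getElem?, ← hlast]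
    · simp [head?_eq_getElem?]

theorem formPerm_pow_apply_ne_self (hl : l.Nodup) {x : α} (hx : x ∈ l) {k : ℕ}
    (hk : 0 < k) (hkl : k < l.length) : (l.formPerm ^ k) x ≠ x := by
  obtain ⟨i, hi, rfl⟩ := getElem_of_mem hx
  rw [formPerm_pow_apply_getElem _ hl, Ne, hl.getElem_inj_iff]
  intro h
  have := Nat.div_add_mod (i + k) l.length
  rcases Nat.eq_zero_or_pos ((i + k) / l.length) with h0 | h0
  · rw [h0] at this
    omega
  · have := Nat.le_mul_of_pos_right l.length h0
    omega

end List

namespace Equiv.Perm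

variable {α β : Type*}

def fiberwise (κ : α → β) (f : β → Perm α) (hf : ∀ b x, κ (f b x) = b ↔ κ x = b) : Perm α where
  toFun x := f (κ x) x
  invFun x := (f (κ x)).symm x
  left_inv x := by simp only [(hf _ x).2 rfl, symm_apply_apply]
  right_inv x := by
    have : κ ((f (κ x)).symm x) = κ x := by rw [← hf, apply_symm_apply]
    simp only [this, apply_symm_apply]

variable {κ : α → β} {f : β → Perm α} {hf : ∀ b x, κ (f b x) = b ↔ κ x = b}

theorem fiberwise_apply (x : α) : fiberwise κ f hf x = f (κ x) x := rfl

theorem fiberwise_pow_apply (n : ℕ) (x : α) : (fiberwise κ f hf ^ n) x = (f (κ x) ^ n) x := by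
  have hκ : ∀ n, κ ((f (κ x) ^ n) x) = κ x := fun n => by
    induction n with
    | zero => rfl
    | succ n ih => rw [pow_succ', mul_apply]; exact (hf _ _).2 ih
  induction n with
  | zero => rfl
  | succ n ih => rw [pow_succ', mul_apply, ih, fiberwise_apply, hκ, pow_succ', mul_apply]

end Equiv.Perm

/-- A locally finite rooted tree on `α`, given by its parent map (which fixes the root) and its
depth function. -/
structure ParentTree (α : Type*) where
  root : α
  parent : α → α
  depth : α → ℕ
  parent_root : parent root = root
  depth_root : depth root = 0
  depth_parent_add_one : ∀ x, x ≠ root → depth (parent x) + 1 = depth x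
  finite_children : ∀ v, {c | parent c = v}.Finite

namespace ParentTree

variable {α : Type*} (T : ParentTree α) {x y v r : α}

theorem depth_parent (x : α) : T.depth (T.parent x) = T.depth x - 1 := by
  by_cases hx : x = T.root
  · simp [hx, T.parent_root, T.depth_root]
  · have := T.depth_parent_add_one x hx
    omega

theorem depth_iterate_parent (k : ℕ) (x : α) : T.depth (T.parent^[k] x) = T.depth x - k := by
  induction k with
  | zero => rfl
  | succ k ih =>
    rw [iterate_succ_apply', depth_parent, ih]
    omega

theorem depth_eq_zero_iff : T.depth x = 0 ↔ x = T.root := by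
  refine ⟨fun h => ?_, fun h => h ▸ T.depth_root⟩
  by_contra hx
  have := T.depth_parent_add_one x hx
  omega

theorem iterate_parent_depth (x : α) : T.parent^[T.depth x] x = T.root := by
  rw [← depth_eq_zero_iff, depth_iterate_parent, Nat.sub_self]

theorem finite_preimage_iterate_parent (k : ℕ) {s : Set α} (hs : s.Finite) :
    (T.parent^[k] ⁻¹' s).Finite := by
  induction k with
  | zero => exact hs
  | succ k ih =>
    rw [iterate_succ, Set.preimage_comp]
    exact (ih.biUnion fun v _ => T.finite_children v).subset fun c hc => Set.mem_biUnion hc rfl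

def descendants (v : α) : Set α := {x | ∃ k, T.parent^[k] x = v}

theorem mem_descendants_self (v : α) : v ∈ T.descendants v := ⟨0, rfl⟩

theorem parent_mem_descendants (hx : x ∈ T.descendants v) (hxv : x ≠ v) :
    T.parent x ∈ T.descendants v := by
  obtain ⟨_ | k, hk⟩ := hx
  · exact absurd hk hxv
  · exact ⟨k, by rwa [iterate_succ_apply] at hk⟩

theorem mem_descendants_of_parent_mem (hx : T.parent x ∈ T.descendants v) :
    x ∈ T.descendants v := by
  obtain ⟨k, hk⟩ := hx
  exact ⟨k + 1, by rwa [iterate_succ_apply]⟩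

theorem descendants_subset (hx : x ∈ T.descendants v) : T.descendants x ⊆ T.descendants v := by
  obtain ⟨k, rfl⟩ := hx
  rintro y ⟨j, rfl⟩
  exact ⟨k + j, iterate_add_apply _ _ _ _⟩

theorem depth_le_of_mem_descendants (hx : x ∈ T.descendants v) : T.depth v ≤ T.depth x := by
  obtain ⟨k, rfl⟩ := hx
  rw [depth_iterate_parent]
  omega

theorem parent_notMem_descendants (hx : x ≠ T.root) : T.parent x ∉ T.descendants x := fun h => by
  have := T.depth_le_of_mem_descendants h
  have := T.depth_parent_add_one x hx
  omega

def IsSubtree (V : Set α) (r : α) : Prop :=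
  r ∈ V ∧ ∀ y ∈ V, y ≠ r → y ≠ T.root ∧ T.parent y ∈ V

variable {T} {V : Set α}

theorem IsSubtree.exists_child (hV : T.IsSubtree V r) (hy : y ∈ V) (hyr : y ≠ r) :
    ∃ c ∈ V, T.parent c = r ∧ c ≠ r := by
  induction h : T.depth y using Nat.strong_induction_on generalizing y with
  | _ n ih =>
    obtain ⟨hroot, hpy⟩ := hV.2 y hy hyr
    by_cases hp : T.parent y = r
    · exact ⟨y, hy, hp, hyr⟩
    · exact ih _ (by have := T.depth_parent_add_one y hroot; omega) hpy hp rfl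

theorem IsSubtree.diff_descendants (hV : T.IsSubtree V r) {c : α}
    (hr : r ∉ T.descendants c) : T.IsSubtree (V \ T.descendants c) r := by
  refine ⟨⟨hV.1, hr⟩, fun y hy hyr => ?_⟩
  obtain ⟨hroot, hpy⟩ := hV.2 y hy.1 hyr
  exact ⟨hroot, hpy, fun h => hy.2 (T.mem_descendants_of_parent_mem h)⟩

theorem IsSubtree.inter_descendants (hV : T.IsSubtree V r) {c : α} (hc : c ∈ V)
    (hr : r ∉ T.descendants c) : T.IsSubtree (V ∩ T.descendants c) c := by
  refine ⟨⟨hc, T.mem_descendants_self c⟩, fun y hy hyc => ?_⟩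
  obtain ⟨hroot, hpy⟩ := hV.2 y hy.1 fun h => hr (h ▸ hy.2)
  exact ⟨hroot, hpy, T.parent_mem_descendants hy.2 hyc⟩

variable {R : α → α → Prop}

theorem IsSubtree.exists_hamiltonian_path (hrefl : ∀ a, R a a)
    (hsymm : ∀ {a b}, R a b → R b a) (hR : ∀ x, x ≠ T.root → R x (T.parent x))
    (hV : T.IsSubtree V r) (hfin : V.Finite) :
    ∃ L : List α, L.Nodup ∧ (∀ y, y ∈ L ↔ y ∈ V) ∧ L.head? = some r ∧
      (∀ y ∈ L.getLast?, R y r) ∧ L.IsChain (R ∘r R ∘r R) := by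
  induction h : V.ncard using Nat.strong_induction_on generalizing V r with
  | _ n ih =>
    rcases em (∃ y ∈ V, y ≠ r) with ⟨y, hy, hyr⟩ | hsing
    swap
    · refine ⟨[r], List.nodup_singleton r, fun y => ?_, rfl, by simpa using hrefl r,
        List.isChain_singleton r⟩
      simp only [not_exists, not_and, not_not] at hsing
      simpa using ⟨fun h => h ▸ hV.1, hsing y⟩
    obtain ⟨c, hc, hcr, hcne⟩ := hV.exists_child hy hyr
    have hcroot : c ≠ T.root := (hV.2 c hc hcne).1
    have hr : r ∉ T.descendants c := hcr ▸ T.parent_notMem_descendants hcroot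
    -- a path of the rest from `r`, then the reversed path of the subtree below `c`
    obtain ⟨L₁, nd₁, mem₁, head₁, last₁, chain₁⟩ := ih _ (h ▸ Set.ncard_lt_ncard
      (Set.sdiff_subset.ssubset_of_mem_notMem hc fun h => h.2 (T.mem_descendants_self c)) hfin)
      (hV.diff_descendants hr) hfin.sdiff rfl
    obtain ⟨L₂, nd₂, mem₂, head₂, last₂, chain₂⟩ := ih _ (h ▸ Set.ncard_lt_ncard
      (Set.inter_subset_left.ssubset_of_mem_notMem hV.1 fun h => hr h.2) hfin)
      (hV.inter_descendants hc hr) (hfin.inter_of_left _) rfl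
    have hL₁ : L₁ ≠ [] := by rintro rfl; simp at head₁
    have hL₂ : L₂ ≠ [] := by rintro rfl; simp at head₂
    have cube_symm : ∀ {a b}, (R ∘r R ∘r R) a b → (R ∘r R ∘r R) b a :=
      fun ⟨a', h₁, b', h₂, h₃⟩ => ⟨b', hsymm h₃, a', hsymm h₂, hsymm h₁⟩
    refine ⟨L₁ ++ L₂.reverse, ?_, fun z => ?_, ?_, ?_, ?_⟩
    · refine List.nodup_append.2 ⟨nd₁, List.nodup_reverse.2 nd₂, fun a ha b hb hab => ?_⟩
      rw [List.mem_reverse, mem₂] at hb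
      exact ((mem₁ a).1 ha).2 (hab ▸ hb.2)
    · simp only [List.mem_append, List.mem_reverse, mem₁, mem₂, Set.mem_sdiff, Set.mem_inter_iff]
      tauto
    · rw [List.head?_append_of_ne_nil _ hL₁, head₁]
    · rw [List.getLast?_append_of_ne_nil _ (List.reverse_ne_nil_iff.2 hL₂), List.getLast?_reverse,
        head₂]
      simpa [hcr] using hR c hcroot
    · refine chain₁.append (List.isChain_reverse.2 (chain₂.imp fun a b h => cube_symm h)) ?_
      intro a ha b hb
      rw [List.head?_reverse] at hb
      exact ⟨r, last₁ a ha, c, hsymm (hcr ▸ hR c hcroot), hsymm (last₂ b hb)⟩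

variable (T)

def Heavy (v : α) : Prop := (T.descendants v).Infinite

theorem heavy_root [Infinite α] : T.Heavy T.root := by
  have : T.descendants T.root = Set.univ :=
    Set.eq_univ_of_forall fun x => ⟨_, T.iterate_parent_depth x⟩
  rw [Heavy, this]
  exact Set.infinite_univ

variable {T}

theorem Heavy.iterate_parent (hv : T.Heavy v) (k : ℕ) : T.Heavy (T.parent^[k] v) :=
  hv.mono (T.descendants_subset ⟨k, rfl⟩)

theorem Heavy.exists_child (hv : T.Heavy v) : ∃ c, T.parent c = v ∧ c ≠ v ∧ T.Heavy c := by
  by_contra! h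
  have hsub : T.descendants v ⊆
      insert v (⋃ c ∈ {c | T.parent c = v ∧ c ≠ v}, T.descendants c) := by
    rintro x ⟨k, hk⟩
    by_cases hxv : x = v
    · exact Or.inl hxv
    obtain ⟨j, -, hj, hjv⟩ := exists_apply_iterate_eq hk hxv
    exact Or.inr (Set.mem_biUnion ⟨hj, hjv⟩ ⟨j, rfl⟩)
  refine hv (Set.Finite.subset (Set.Finite.insert v ?_) hsub)
  exact ((T.finite_children v).subset fun c hc => hc.1).biUnion fun c hc =>
    Set.not_infinite.1 (h c hc.1 hc.2)

theorem Heavy.exists_descendant (hv : T.Heavy v) (i : ℕ) :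
    ∃ y, T.Heavy y ∧ T.parent^[i] y = v ∧ T.depth y = T.depth v + i := by
  induction i with
  | zero => exact ⟨v, hv, rfl, rfl⟩
  | succ i ih =>
    obtain ⟨y, hy, hyv, hdy⟩ := ih
    obtain ⟨c, hcy, hcne, hc⟩ := hy.exists_child
    have hcroot : c ≠ T.root := fun h => hcne (by rw [← hcy, h, T.parent_root])
    refine ⟨c, hc, by rw [iterate_succ_apply, hcy, hyv], ?_⟩
    have := T.depth_parent_add_one c hcroot
    rw [hcy] at this
    omega

variable (T) [Infinite α]

theorem exists_heavy_iterate_parent (x : α) : ∃ k, T.Heavy (T.parent^[k] x) :=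
  ⟨_, T.iterate_parent_depth x ▸ T.heavy_root⟩

open Classical in
noncomputable def heavyAncestor (x : α) : α :=
  T.parent^[Nat.find (T.exists_heavy_iterate_parent x)] x

theorem heavy_heavyAncestor (x : α) : T.Heavy (T.heavyAncestor x) := by
  classical
  exact Nat.find_spec (T.exists_heavy_iterate_parent x)

theorem heavyAncestor_eq_self (hx : T.Heavy x) : T.heavyAncestor x = x := by
  classical
  rw [heavyAncestor, (Nat.find_eq_zero _).2 hx, iterate_zero_apply]

theorem heavyAncestor_parent_of_not_heavy (hx : ¬T.Heavy x) :
    T.heavyAncestor (T.parent x) = T.heavyAncestor x := by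
  classical
  rw [heavyAncestor, heavyAncestor, Nat.find_comp_succ (T.exists_heavy_iterate_parent x)
    (T.exists_heavy_iterate_parent (T.parent x)) hx, iterate_succ_apply]
  rfl

theorem finite_setOf_heavyAncestor_eq (v : α) : {x | T.heavyAncestor x = v}.Finite := by
  classical
  have hsub : {x | T.heavyAncestor x = v} ⊆
      insert v (⋃ c ∈ {c | T.parent c = v ∧ ¬T.Heavy c}, T.descendants c) := by
    intro x hx
    by_cases hxv : x = v
    · exact Or.inl hxv
    obtain ⟨j, hj, hjv, -⟩ := exists_apply_iterate_eq hx hxv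
    exact Or.inr (Set.mem_biUnion ⟨hjv, Nat.find_min _ hj⟩ ⟨j, rfl⟩)
  refine Set.Finite.subset (Set.Finite.insert v ?_) hsub
  exact ((T.finite_children v).subset fun c hc => hc.1).biUnion fun c hc =>
    Set.not_infinite.1 hc.2

variable (m : ℕ)

noncomputable def pieceRoot (x : α) : α :=
  T.parent^[T.depth (T.heavyAncestor x) % m] (T.heavyAncestor x)

theorem heavy_pieceRoot (x : α) : T.Heavy (T.pieceRoot m x) :=
  (T.heavy_heavyAncestor x).iterate_parent _

theorem dvd_depth_pieceRoot (x : α) : m ∣ T.depth (T.pieceRoot m x) := by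
  rw [pieceRoot, depth_iterate_parent]
  exact Nat.dvd_sub_mod _

variable {m}

theorem pieceRoot_eq_of_heavy {i : ℕ} (hi : i < m) (hy : T.Heavy y) (hyv : T.parent^[i] y = v)
    (hdy : T.depth y = T.depth v + i) (hv : m ∣ T.depth v) : T.pieceRoot m y = v := by
  obtain ⟨q, hq⟩ := hv
  rw [pieceRoot, T.heavyAncestor_eq_self hy, hdy, hq, Nat.mul_add_mod, Nat.mod_eq_of_lt hi, hyv]

theorem pieceRoot_pieceRoot (hm : 0 < m) (x : α) :
    T.pieceRoot m (T.pieceRoot m x) = T.pieceRoot m x :=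
  T.pieceRoot_eq_of_heavy hm (T.heavy_pieceRoot m x) rfl rfl (T.dvd_depth_pieceRoot m x)

theorem pieceRoot_parent (hm : 0 < m) (hy : y ≠ T.pieceRoot m y) :
    y ≠ T.root ∧ T.pieceRoot m (T.parent y) = T.pieceRoot m y := by
  have hroot : y ≠ T.root := by
    rintro rfl
    exact hy (T.pieceRoot_eq_of_heavy (v := T.root) hm T.heavy_root rfl rfl
      (T.depth_root ▸ dvd_zero m)).symm
  refine ⟨hroot, ?_⟩
  by_cases hheavy : T.Heavy y
  · have hw : T.parent^[T.depth y % m] y = T.pieceRoot m y := by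
      rw [pieceRoot, T.heavyAncestor_eq_self hheavy]
    have hi0 : T.depth y % m ≠ 0 := fun h => hy (by rw [← hw, h]; rfl)
    obtain ⟨i, hi⟩ : ∃ i, T.depth y % m = i + 1 := Nat.exists_eq_add_one_of_ne_zero hi0
    have hdepth : T.depth (T.pieceRoot m y) = T.depth y - T.depth y % m := by
      rw [← hw, depth_iterate_parent]
    have := T.depth_parent_add_one y hroot
    have := Nat.mod_lt (T.depth y) hm
    have := Nat.mod_le (T.depth y) m
    exact T.pieceRoot_eq_of_heavy (y := T.parent y) (i := i) (by omega) (hheavy.iterate_parent 1)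
      (by rw [← hw, hi]; rfl) (by omega) (T.dvd_depth_pieceRoot m y)
  · rw [pieceRoot, pieceRoot, T.heavyAncestor_parent_of_not_heavy hheavy]

theorem isSubtree_setOf_pieceRoot_eq (hm : 0 < m) (hv : T.pieceRoot m v = v) :
    T.IsSubtree {y | T.pieceRoot m y = v} v :=
  ⟨hv, fun y hy hyv => by
    subst hy
    exact T.pieceRoot_parent hm hyv⟩

theorem finite_setOf_pieceRoot_eq (hm : 0 < m) (v : α) : {y | T.pieceRoot m y = v}.Finite := by
  refine ((Set.finite_lt_nat m).biUnion fun i _ =>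
    (T.finite_preimage_iterate_parent i (Set.finite_singleton v)).biUnion fun u _ =>
      T.finite_setOf_heavyAncestor_eq u).subset fun y hy => ?_
  exact Set.mem_biUnion (Nat.mod_lt _ hm) (Set.mem_biUnion hy rfl)

theorem le_ncard_setOf_pieceRoot_eq (hm : 0 < m) (hv : T.Heavy v) (hvm : m ∣ T.depth v) :
    m ≤ {y | T.pieceRoot m y = v}.ncard := by
  choose f hf using hv.exists_descendant
  refine Set.le_ncard_of_inj_on_range f (fun i hi => ?_) (fun i _ j _ hij => ?_)
    (T.finite_setOf_pieceRoot_eq hm v)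
  · exact T.pieceRoot_eq_of_heavy hi (hf i).1 (hf i).2.1 (hf i).2.2 hvm
  · have := congrArg T.depth hij
    rw [(hf i).2.2, (hf j).2.2] at this
    omega

theorem exists_hamiltonian_cycle_setOf_pieceRoot_eq (hrefl : ∀ a, R a a)
    (hsymm : ∀ {a b}, R a b → R b a) (hR : ∀ x, x ≠ T.root → R x (T.parent x)) (hm : 0 < m)
    (v : α) : ∃ L : List α, L.Nodup ∧ (∀ y, y ∈ L ↔ T.pieceRoot m y = v) ∧
      (∀ a ∈ L.getLast?, ∀ b ∈ L.head?, (R ∘r R ∘r R) a b) ∧ L.IsChain (R ∘r R ∘r R) := by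
  by_cases hv : T.pieceRoot m v = v
  · obtain ⟨L, nd, mem, head, last, chain⟩ := (T.isSubtree_setOf_pieceRoot_eq hm hv
      ).exists_hamiltonian_path hrefl hsymm hR (T.finite_setOf_pieceRoot_eq hm v)
    refine ⟨L, nd, mem, fun a ha b hb => ?_, chain⟩
    rw [head, Option.mem_some_iff] at hb
    subst hb
    exact ⟨v, last a ha, v, hrefl v, hrefl v⟩
  · refine ⟨[], List.nodup_nil, fun y => ?_, by simp, List.isChain_nil⟩
    simp only [List.not_mem_nil, false_iff]
    rintro rfl
    exact hv (T.pieceRoot_pieceRoot hm y)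

theorem exists_perm_cube_long_cycles (hrefl : ∀ a, R a a) (hsymm : ∀ {a b}, R a b → R b a)
    (hR : ∀ x, x ≠ T.root → R x (T.parent x)) (n : ℕ) :
    ∃ σ : Perm α, (∀ x, (R ∘r R ∘r R) x (σ x)) ∧ ∀ k, 0 < k → k ≤ n → ∀ x, (σ ^ k) x ≠ x := by
  classical
  have hm : 0 < n + 1 := n.succ_pos
  choose L nd mem wrap chain using T.exists_hamiltonian_cycle_setOf_pieceRoot_eq hrefl hsymm hR hm
  have hx : ∀ x, x ∈ L (T.pieceRoot (n + 1) x) := fun x => (mem _ x).2 rfl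
  refine ⟨Perm.fiberwise (T.pieceRoot (n + 1)) (fun v => (L v).formPerm)
      (fun v x => by rw [← mem, ← mem, List.formPerm_mem_iff_mem]),
    fun x => List.rel_formPerm_apply (nd _) (chain _) (wrap _) (hx x), fun k hk hkn x => ?_⟩
  rw [Perm.fiberwise_pow_apply]
  refine List.formPerm_pow_apply_ne_self (nd _) (hx x) hk (lt_of_le_of_lt hkn ?_)
  have := T.le_ncard_setOf_pieceRoot_eq hm (T.heavy_pieceRoot _ x) (T.dvd_depth_pieceRoot _ x)
  have hset : {y | T.pieceRoot (n + 1) y = T.pieceRoot (n + 1) x} =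
      ((L (T.pieceRoot (n + 1) x)).toFinset : Set α) := by
    ext
    simp [mem]
  rw [hset, Set.ncard_coe_finset, List.toFinset_card_of_nodup (nd _)] at this
  omega

end ParentTree

section Group

open Pointwise Filter

variable {G : Type*} [Group G]

theorem Subgroup.exists_mem_pow_of_closure_eq_top {S : Set G} (hS : Subgroup.closure S = ⊤)
    (g : G) : ∃ k : ℕ, g ∈ (insert 1 (S ∪ S⁻¹)) ^ k := by
  have hg : g ∈ Submonoid.closure (S ∪ S⁻¹) := by
    rw [← Subgroup.closure_toSubmonoid, hS]
    trivial
  induction hg using Submonoid.closure_induction with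
  | mem x hx => exact ⟨1, by rw [pow_one]; exact Set.mem_insert_of_mem _ hx⟩
  | one => exact ⟨0, by rw [pow_zero]; rfl⟩
  | mul x y _ _ ihx ihy =>
    obtain ⟨k, hk⟩ := ihx
    obtain ⟨l, hl⟩ := ihy
    exact ⟨k + l, by rw [pow_add]; exact Set.mul_mem_mul hk hl⟩

theorem ParentTree.exists_of_forall_mem_pow {E : Set G} (hE : E.Finite)
    (hgen : ∀ g : G, ∃ k, g ∈ E ^ k) :
    ∃ T : ParentTree G, T.root = 1 ∧ ∀ g, g ≠ 1 → g * (T.parent g)⁻¹ ∈ E := by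
  classical
  set ν : G → ℕ := fun g => Nat.find (hgen g)
  have hstep : ∀ g, g ≠ 1 → ∃ b, g * b⁻¹ ∈ E ∧ ν b + 1 = ν g := by
    intro g hg
    obtain ⟨k, hk⟩ : ∃ k, ν g = k + 1 := Nat.exists_eq_add_one_of_ne_zero fun h =>
      hg (by simpa [ν, h] using Nat.find_spec (hgen g))
    have hmem := Nat.find_spec (hgen g)
    rw [show Nat.find (hgen g) = k + 1 from hk, pow_succ'] at hmem
    obtain ⟨a, ha, b, hb, rfl⟩ := hmem
    refine ⟨b, by simpa using ha, ?_⟩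
    have h1 : ν b ≤ k := Nat.find_min' _ hb
    have h2 : ν (a * b) ≤ ν b + 1 := Nat.find_min' _ <| by
      rw [pow_succ']
      exact Set.mul_mem_mul ha (Nat.find_spec (hgen b))
    beta_reduce at hk ⊢
    omega
  choose! p hpE hpν using hstep
  refine ⟨{ root := 1
            parent := fun g => if g = 1 then 1 else p g
            depth := ν
            parent_root := if_pos rfl
            depth_root := (Nat.find_eq_zero _).2 (by simp)
            depth_parent_add_one := fun g hg => by simp only [if_neg hg]; exact hpν g hg
            finite_children := fun v => ?_ }, rfl, fun g hg => ?_⟩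
  · refine ((hE.image (· * v)).insert 1).subset fun c hc => ?_
    by_cases hc1 : c = 1
    · exact Or.inl hc1
    · simp only [Set.mem_ofPred_eq, if_neg hc1] at hc
      exact Or.inr ⟨c * v⁻¹, hc ▸ hpE c hc1, by simp⟩
  · simp only [if_neg hg]
    exact hpE g hg

theorem exists_perm_mul_inv_mem_long_cycles [Infinite G] {E : Set G} (hE : E.Finite)
    (hE1 : 1 ∈ E) (hEinv : ∀ a ∈ E, a⁻¹ ∈ E) (hgen : ∀ g : G, ∃ k, g ∈ E ^ k) (n : ℕ) :
    ∃ σ : Perm G, (∀ g, σ g * g⁻¹ ∈ E * E * E) ∧ ∀ k, 0 < k → k ≤ n → ∀ g, (σ ^ k) g ≠ g := by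
  obtain ⟨T, hT1, hTE⟩ := ParentTree.exists_of_forall_mem_pow hE hgen
  obtain ⟨σ, hσ, hσn⟩ := T.exists_perm_cube_long_cycles (R := fun a b => b * a⁻¹ ∈ E)
    (fun a => by simpa using hE1) (fun {a b} h => by simpa using hEinv _ h)
    (fun x hx => by simpa using hEinv _ (hTE x (hT1 ▸ hx))) n
  refine ⟨σ, fun g => ?_, hσn⟩
  obtain ⟨a, ha, b, hb, hb'⟩ := hσ g
  convert Set.mul_mem_mul (Set.mul_mem_mul hb' hb) ha using 1
  group

namespace Equiv.Perm

def finiteDisplacement (G : Type*) [Group G] : Subgroup (Perm G) where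
  carrier := {σ | (Set.range fun g => σ g * g⁻¹).Finite}
  one_mem' := (Set.finite_singleton 1).subset (by rintro _ ⟨g, rfl⟩; simp)
  mul_mem' {σ τ} hσ hτ := (hσ.mul hτ).subset <| by
    rintro _ ⟨g, rfl⟩
    exact ⟨_, ⟨τ g, rfl⟩, _, ⟨g, rfl⟩, by simp [mul_assoc]⟩
  inv_mem' {σ} hσ := hσ.inv.subset <| by
    rintro _ ⟨g, rfl⟩
    exact ⟨σ⁻¹ g, by simp⟩

theorem exists_frequently_eq_of_mul_inv_mem {B : Set G} (hB : B.Finite) (σ : ℕ → Perm G)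
    (hσB : ∀ n g, σ n g * g⁻¹ ∈ B) :
    ∃ τ : Perm G, (∀ g, τ g * g⁻¹ ∈ B) ∧
      ∀ s : Set G, s.Finite → ∀ k, ∃ n, k ≤ n ∧ ∀ g ∈ s, σ n g = τ g := by
  have hlim : ∀ g, ∃ a, ∀ᶠ n in (hyperfilter ℕ : Filter ℕ), σ n g = a := fun g => by
    obtain ⟨a, -, ha⟩ := (Ultrafilter.eventually_exists_mem_iff (hB.image (· * g))
      (P := fun a n => σ n g = a)).1
      (Eventually.of_forall fun n => ⟨σ n g, ⟨_, hσB n g, by simp⟩, rfl⟩)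
    exact ⟨a, ha⟩
  choose τ hτ using hlim
  have hagree : ∀ s : Set G, s.Finite → ∀ k, ∃ n, k ≤ n ∧ ∀ g ∈ s, σ n g = τ g := fun s hs k =>
    (Eventually.and (Nat.hyperfilter_le_atTop (eventually_ge_atTop k))
      ((hs.eventually_all).2 fun g _ => hτ g)).exists
  have hinj : Injective τ := fun a b hab => by
    obtain ⟨n, -, hn⟩ := hagree {a, b} (by simp) 0
    exact (σ n).injective (by rw [hn a (by simp), hn b (by simp), hab])
  have hsurj : Surjective τ := fun y => by
    obtain ⟨n, -, hn⟩ := hagree ((fun b => b⁻¹ * y) '' B) (hB.image _) 0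
    exact ⟨(σ n).symm y, (hn _ ⟨_, hσB n ((σ n).symm y), by simp⟩).symm.trans (by simp)⟩
  refine ⟨Equiv.ofBijective τ ⟨hinj, hsurj⟩, fun g => ?_, hagree⟩
  obtain ⟨n, hn⟩ := (hτ g).exists
  show τ g * g⁻¹ ∈ B
  exact hn ▸ hσB n g

theorem exists_forall_pow_apply_ne {B : Set G} (hB : B.Finite)
    (h : ∀ n : ℕ, ∃ σ : Perm G, (∀ g, σ g * g⁻¹ ∈ B) ∧ ∀ k, 0 < k → k ≤ n → ∀ g, (σ ^ k) g ≠ g) :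
    ∃ σ : Perm G, (∀ g, σ g * g⁻¹ ∈ B) ∧ ∀ k, 0 < k → ∀ g, (σ ^ k) g ≠ g := by
  choose σ hσB hσ using h
  obtain ⟨τ, hτB, hagree⟩ := exists_frequently_eq_of_mul_inv_mem hB σ hσB
  refine ⟨τ, hτB, fun k hk g hg => ?_⟩
  obtain ⟨n, hkn, hn⟩ := hagree _ ((Set.finite_Iio k).image fun j => (τ ^ j) g) k
  have hpow : ∀ j ≤ k, (σ n ^ j) g = (τ ^ j) g := by
    intro j hj
    induction j with
    | zero => rfl
    | succ j ih =>
      rw [pow_succ', mul_apply, ih (by omega), hn _ ⟨j, by simpa using (by omega : j < k), rfl⟩,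
        pow_succ', mul_apply]
  exact hσ n k hk hkn g ((hpow k le_rfl).trans hg)

end Equiv.Perm

theorem HasTranslationLikeAction.of_perm {σ : Perm G} (hσ : σ ∈ Perm.finiteDisplacement G)
    (hfree : ∀ k : ℕ, 0 < k → ∀ g, (σ ^ k) g ≠ g) :
    HasTranslationLikeAction (Multiplicative ℤ) G := by
  refine ⟨fun z g => (σ ^ z.toAdd) g, fun g => rfl, fun a b g => by simp [zpow_add],
    fun z g hz => ?_, fun z => Subgroup.zpow_mem _ hσ _⟩
  by_contra hz1
  have hpos : 0 < z.toAdd.natAbs := Int.natAbs_pos.2 (by simpa using hz1)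
  rcases Int.natAbs_eq z.toAdd with h | h
  · exact hfree _ hpos g (by rw [← zpow_natCast, ← h]; exact hz)
  · refine hfree _ hpos g (Perm.inv_eq_iff_eq.1 ?_).symm
    rwa [← zpow_natCast, ← zpow_neg, ← h]

theorem hasTranslationLikeAction_multiplicative_int [Infinite G] (hG : Group.FG G) :
    HasTranslationLikeAction (Multiplicative ℤ) G := by
  obtain ⟨S, hS, hSfin⟩ := Group.fg_iff.1 hG
  have hE : (insert 1 (S ∪ S⁻¹)).Finite := (hSfin.union hSfin.inv).insert 1
  have hEinv : ∀ a ∈ insert 1 (S ∪ S⁻¹), a⁻¹ ∈ insert 1 (S ∪ S⁻¹) := by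
    rintro a (rfl | ha | ha) <;> simp_all
  have hB := (hE.mul hE).mul hE
  obtain ⟨σ, hσB, hσ⟩ := Perm.exists_forall_pow_apply_ne hB
    (exists_perm_mul_inv_mem_long_cycles hE (Set.mem_insert 1 _) hEinv
      (Subgroup.exists_mem_pow_of_closure_eq_top hS))
  exact .of_perm (hB.subset (Set.range_subset_iff.2 hσB)) hσ

end Group

theorem HasTranslationLikeAction.prod {H₁ H₂ G₁ G₂ : Type*} [Group H₁] [Group H₂] [Group G₁]
    [Group G₂] (h₁ : HasTranslationLikeAction H₁ G₁) (h₂ : HasTranslationLikeAction H₂ G₂) :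
    HasTranslationLikeAction (H₁ × H₂) (G₁ × G₂) := by
  obtain ⟨α₁, one₁, mul₁, free₁, fin₁⟩ := h₁
  obtain ⟨α₂, one₂, mul₂, free₂, fin₂⟩ := h₂
  refine ⟨fun h g => (α₁ h.1 g.1, α₂ h.2 g.2), fun g => by simp [one₁, one₂],
    fun a b g => by simp [mul₁, mul₂], fun h g hg => ?_, fun h => ?_⟩
  · rw [Prod.mk.injEq] at hg
    exact Prod.ext (free₁ _ _ hg.1) (free₂ _ _ hg.2)
  · refine ((fin₁ h.1).prod (fin₂ h.2)).subset ?_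
    rintro _ ⟨g, rfl⟩
    exact ⟨⟨g.1, rfl⟩, ⟨g.2, rfl⟩⟩

theorem HasTranslationLikeAction.comp_injective {H H' G : Type*} [Group H] [Group H'] [Group G]
    (h : HasTranslationLikeAction H G) (f : H' →* H) (hf : Injective f) :
    HasTranslationLikeAction H' G := by
  obtain ⟨α, one, mul, free, fin⟩ := h
  exact ⟨fun h g => α (f h) g, by simpa using one, by simpa using fun a b => mul (f a) (f b),
    fun h g hg => hf (by simpa using free _ _ hg), fun h => fin (f h)⟩

/-- The product of two infinite finitely generated groups admits a translation-like action
of `ℤ²`. -/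
theorem product_has_translationLike_Z2 {G₁ G₂ : Type*} [Group G₁] [Group G₂]
    [Infinite G₁] [Infinite G₂] (h1 : Group.FG G₁) (h2 : Group.FG G₂) :
    HasTranslationLikeAction (Multiplicative (ℤ × ℤ)) (G₁ × G₂) :=
  ((hasTranslationLikeAction_multiplicative_int h1).prod
    (hasTranslationLikeAction_multiplicative_int h2)).comp_injective
    (MulEquiv.prodMultiplicative ℤ ℤ).toMonoidHom (MulEquiv.prodMultiplicative ℤ ℤ).injective
end
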